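/- Under the hypotheses of the previous statement (with ε ≤ min{μ/2, μ²/(32M), μδ/12, M}), the map g(x) := x − (∇²E_NN(x*))⁻¹ ∇E_NN(x), where E_NN = E + E_δ, maps the closed ball of radius D := (μ − √(μ² − 32Mε))/(8M) around x* into itself and is a contraction there with Lipschitz constant at most 1/2. -/

import Mathlib

/-!
The Hessian `H` of `E + Eδ` at `x*` is within `ε` of the Hessian of `E`, which is symmetric with
eigenvalues of modulus at least `μ`; hence `‖H v‖ ≥ (μ / 2) ‖v‖` and `‖H⁻¹‖ ≤ 2 / μ`. On the ball
of radius `D` the Hessian of `E + Eδ` stays within `(M + ε) D` of `H`, so by the mean value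
inequality `g` is Lipschitz there with constant `2 (M + ε) D / μ ≤ 4 M D / μ ≤ 1 / 2`, while
`‖g x* - x*‖ ≤ 2 ε / μ`. The radius `D` is the smaller root of `4 M D² - μ D + 2 ε = 0`, i.e. of
`2 ε / μ + (4 M D / μ) D = D`, so the ball is mapped into itself.
-/

open InnerProductSpace Metric Set
open scoped Gradient

section Gradient

variable {F : Type*} [NormedAddCommGroup F] [InnerProductSpace ℝ F] [CompleteSpace F]
  {f g : F → ℝ}

theorem ContDiff.gradient_right {m n : WithTop ℕ∞} (hf : ContDiff ℝ n f) (hmn : m + 1 ≤ n) :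
    ContDiff ℝ m (∇ f) :=
  (toDual ℝ F).symm.toContinuousLinearEquiv.contDiff.comp (hf.fderiv_right hmn)

theorem gradient_fun_add {x : F} (hf : DifferentiableAt ℝ f x) (hg : DifferentiableAt ℝ g x) :
    ∇ (fun y => f y + g y) x = ∇ f x + ∇ g x := by
  simp only [gradient, fderiv_fun_add hf hg, map_add]

theorem fderiv_gradient_fun_add (hf : ContDiff ℝ 2 f) (hg : ContDiff ℝ 2 g) (x : F) :
    fderiv ℝ (∇ fun y => f y + g y) x = fderiv ℝ (∇ f) x + fderiv ℝ (∇ g) x := by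
  have hsum : (∇ fun y => f y + g y) = fun y => ∇ f y + ∇ g y :=
    funext fun y => gradient_fun_add (hf.differentiable two_ne_zero y)
      (hg.differentiable two_ne_zero y)
  rw [hsum]
  exact fderiv_fun_add ((hf.gradient_right le_rfl).differentiable one_ne_zero x)
    ((hg.gradient_right le_rfl).differentiable one_ne_zero x)

theorem inner_fderiv_gradient_apply (x u v : F) :
    ⟪fderiv ℝ (∇ f) x u, v⟫_ℝ = fderiv ℝ (fderiv ℝ f) x u v := by
  have : fderiv ℝ (∇ f) x = _ := (toDual ℝ F).symm.toContinuousLinearEquiv.comp_fderiv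
  rw [this]
  exact toDual_symm_apply

theorem ContDiffAt.isSymmetric_fderiv_gradient {x : F} (hf : ContDiffAt ℝ 2 f x) :
    (fderiv ℝ (∇ f) x : F →ₗ[ℝ] F).IsSymmetric := by
  intro u v
  have hsymm := hf.isSymmSndFDerivAt (by simp)
  simp only [ContinuousLinearMap.coe_coe]
  rw [inner_fderiv_gradient_apply, real_inner_comm, inner_fderiv_gradient_apply, hsymm]

end Gradient

theorem LinearMap.IsSymmetric.mul_norm_le_norm_apply {F : Type*} [NormedAddCommGroup F]
    [InnerProductSpace ℝ F] [FiniteDimensional ℝ F] {T : F →ₗ[ℝ] F} (hT : T.IsSymmetric)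
    {μ : ℝ} (hμ : 0 ≤ μ) (heig : ∀ lam, Module.End.HasEigenvalue T lam → μ ≤ |lam|) (v : F) :
    μ * ‖v‖ ≤ ‖T v‖ := by
  have hn : Module.finrank ℝ F = Module.finrank ℝ F := rfl
  set b := hT.eigenvectorBasis hn
  have hsq : (μ * ‖v‖) ^ 2 ≤ ‖T v‖ ^ 2 := by
    rw [← b.repr.norm_map v, ← b.repr.norm_map (T v), mul_pow, EuclideanSpace.norm_sq_eq,
      EuclideanSpace.norm_sq_eq, Finset.mul_sum]
    refine Finset.sum_le_sum fun i _ => ?_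
    rw [hT.eigenvectorBasis_apply_self_apply, norm_mul, mul_pow]
    have := heig _ (hT.hasEigenvalue_eigenvalues hn i)
    gcongr
    simpa using this
  exact (pow_le_pow_iff_left₀ (by positivity) (norm_nonneg _) two_ne_zero).mp hsq

section Operator

variable {E : Type*} [NormedAddCommGroup E] [NormedSpace ℝ E]

theorem ContinuousLinearMap.sub_mul_norm_le_norm_add_apply {T S : E →L[ℝ] E} {μ ε : ℝ}
    (hT : ∀ v, μ * ‖v‖ ≤ ‖T v‖) (hS : ‖S‖ ≤ ε) (v : E) : (μ - ε) * ‖v‖ ≤ ‖(T + S) v‖ := by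
  have hSv : ‖S v‖ ≤ ε * ‖v‖ := S.le_of_opNorm_le hS v
  have : ‖T v‖ ≤ ‖(T + S) v‖ + ‖S v‖ := by
    simpa using norm_sub_le ((T + S) v) (S v)
  linarith [hT v]

theorem ContinuousLinearMap.isUnit_of_mul_norm_le [FiniteDimensional ℝ E] {A : E →L[ℝ] E}
    {c : ℝ} (hc : 0 < c) (hA : ∀ v, c * ‖v‖ ≤ ‖A v‖) : IsUnit A := by
  have hinj : Function.Injective A := by
    refine (injective_iff_map_eq_zero A).mpr fun v hv => norm_le_zero_iff.mp ?_
    nlinarith [hA v, norm_nonneg v, norm_nonneg (A v), hv ▸ norm_zero (E := E)]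
  exact ContinuousLinearMap.isUnit_iff_bijective.mpr
    ⟨hinj, LinearMap.injective_iff_surjective (f := (A : E →ₗ[ℝ] E)).mp hinj⟩

theorem ContinuousLinearMap.norm_inverse_le {A : E →L[ℝ] E} (hu : IsUnit A) {c : ℝ} (hc : 0 < c)
    (hA : ∀ v, c * ‖v‖ ≤ ‖A v‖) : ‖Ring.inverse A‖ ≤ c⁻¹ := by
  refine ContinuousLinearMap.opNorm_le_bound _ (inv_nonneg.mpr hc.le) fun w => ?_
  have hAB : A (Ring.inverse A w) = w := by
    simpa using DFunLike.congr_fun (Ring.mul_inverse_cancel A hu) w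
  rw [inv_mul_eq_div, le_div_iff₀' hc]
  simpa [hAB] using hA (Ring.inverse A w)

end Operator

section HessianOfSum

variable {F : Type*} [NormedAddCommGroup F] [InnerProductSpace ℝ F] [CompleteSpace F]
  {f h : F → ℝ}

theorem sub_mul_norm_le_norm_fderiv_gradient_add_apply [FiniteDimensional ℝ F]
    (hf : ContDiff ℝ 2 f) (hh : ContDiff ℝ 2 h) {x : F} {μ ε : ℝ} (hμ : 0 ≤ μ)
    (heig : ∀ lam, Module.End.HasEigenvalue (fderiv ℝ (∇ f) x : F →ₗ[ℝ] F) lam → μ ≤ |lam|)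
    (hε : ‖fderiv ℝ (∇ h) x‖ ≤ ε) (v : F) :
    (μ - ε) * ‖v‖ ≤ ‖fderiv ℝ (∇ fun y => f y + h y) x v‖ := by
  rw [fderiv_gradient_fun_add hf hh]
  exact ContinuousLinearMap.sub_mul_norm_le_norm_add_apply
    (hf.contDiffAt.isSymmetric_fderiv_gradient.mul_norm_le_norm_apply hμ heig) hε v

theorem norm_gradient_add_sub_sub_le (hf : ContDiff ℝ 2 f) (hh : ContDiff ℝ 2 h) {x₀ : F}
    {r M ε : ℝ} (hM : 0 ≤ M) (hε : 0 ≤ ε)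
    (hfL : ∀ x ∈ closedBall x₀ r, ∀ y ∈ closedBall x₀ r,
      ‖fderiv ℝ (∇ f) x - fderiv ℝ (∇ f) y‖ ≤ M * ‖x - y‖)
    (hhL : ∀ x ∈ closedBall x₀ r, ∀ y ∈ closedBall x₀ r,
      ‖fderiv ℝ (∇ h) x - fderiv ℝ (∇ h) y‖ ≤ ε * ‖x - y‖)
    {x y : F} (hx : x ∈ closedBall x₀ r) (hy : y ∈ closedBall x₀ r) :
    ‖∇ (fun z => f z + h z) x - ∇ (fun z => f z + h z) y
        - fderiv ℝ (∇ fun z => f z + h z) x₀ (x - y)‖ ≤ (M + ε) * r * ‖x - y‖ := by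
  have hx₀ : x₀ ∈ closedBall x₀ r := mem_closedBall_self (dist_nonneg.trans hx)
  refine (convex_closedBall x₀ r).norm_image_sub_le_of_norm_fderiv_le'
    (fun z _ => ((hf.add hh).gradient_right le_rfl).differentiable one_ne_zero z)
    (fun z hz => ?_) hy hx
  have hzr : ‖z - x₀‖ ≤ r := mem_closedBall_iff_norm.mp hz
  rw [fderiv_gradient_fun_add hf hh, fderiv_gradient_fun_add hf hh, add_sub_add_comm, add_mul]
  exact norm_add_le_of_le ((hfL z hz x₀ hx₀).trans (by gcongr))
    ((hhL z hz x₀ hx₀).trans (by gcongr))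

end HessianOfSum

theorem Metric.mapsTo_closedBall_of_dist_le {X : Type*} [PseudoMetricSpace X] {g : X → X} {x₀ : X}
    {r q : ℝ} (hq : 0 ≤ q) (hg : ∀ x ∈ closedBall x₀ r, dist (g x) (g x₀) ≤ q * dist x x₀)
    (h₀ : dist (g x₀) x₀ ≤ (1 - q) * r) : MapsTo g (closedBall x₀ r) (closedBall x₀ r) := by
  intro x hx
  rw [mem_closedBall] at hx ⊢
  calc dist (g x) x₀ ≤ dist (g x) (g x₀) + dist (g x₀) x₀ := dist_triangle _ _ _
    _ ≤ q * r + (1 - q) * r := by gcongr; exact (hg x (mem_closedBall.mpr hx)).trans (by gcongr)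
    _ = r := by ring

section NewtonMap

variable {E : Type*} [NormedAddCommGroup E] [NormedSpace ℝ E]

def newtonMap (F : E → E) (B : E →L[ℝ] E) (x : E) : E := x - B (F x)

theorem dist_newtonMap_le {F : E → E} {A B : E →L[ℝ] E} (hBA : B * A = 1) {K C : ℝ}
    (hB : ‖B‖ ≤ K) {s : Set E} (hF : ∀ x ∈ s, ∀ y ∈ s, ‖F x - F y - A (x - y)‖ ≤ C * ‖x - y‖)
    {x y : E} (hx : x ∈ s) (hy : y ∈ s) :
    dist (newtonMap F B x) (newtonMap F B y) ≤ K * C * dist x y := by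
  have hBA' : B (A (x - y)) = x - y := by simpa using DFunLike.congr_fun hBA (x - y)
  have : x - B (F x) - (y - B (F y)) = -B (F x - F y - A (x - y)) := by
    rw [map_sub, hBA', map_sub]; abel
  rw [newtonMap, newtonMap, dist_eq_norm, dist_eq_norm, this, norm_neg, mul_assoc]
  calc ‖B (F x - F y - A (x - y))‖ ≤ ‖B‖ * ‖F x - F y - A (x - y)‖ := B.le_opNorm _
    _ ≤ K * (C * ‖x - y‖) :=
        mul_le_mul hB (hF x hx y hy) (norm_nonneg _) ((norm_nonneg B).trans hB)

theorem newtonMap_mapsTo_and_lipschitzOnWith {F : E → E} {A B : E →L[ℝ] E} (hBA : B * A = 1)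
    {K C η r : ℝ} {q : NNReal} {x₀ : E} (hB : ‖B‖ ≤ K)
    (hF : ∀ x ∈ closedBall x₀ r, ∀ y ∈ closedBall x₀ r,
      ‖F x - F y - A (x - y)‖ ≤ C * ‖x - y‖)
    (hF₀ : ‖F x₀‖ ≤ η) (hC : 0 ≤ C) (hq : K * C ≤ q) (hr : K * η ≤ (1 - K * C) * r) :
    MapsTo (newtonMap F B) (closedBall x₀ r) (closedBall x₀ r) ∧
      LipschitzOnWith q (newtonMap F B) (closedBall x₀ r) := by
  have hK : 0 ≤ K := (norm_nonneg B).trans hB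
  have hstep₀ : dist (newtonMap F B x₀) x₀ ≤ K * η := by
    rw [newtonMap, dist_eq_norm, sub_sub_cancel_left, norm_neg]
    exact B.le_of_opNorm_le_of_le hB hF₀
  refine ⟨mapsTo_closedBall_of_dist_le (mul_nonneg hK hC) (fun x hx => ?_) (hstep₀.trans hr),
    LipschitzOnWith.of_dist_le_mul fun x hx y hy =>
      (dist_newtonMap_le hBA hB hF hx hy).trans (by gcongr)⟩
  exact dist_newtonMap_le hBA hB hF hx (mem_closedBall_self (dist_nonneg.trans hx))

end NewtonMap

theorem smallRoot_spec {μ M ε D : ℝ} (hμ : 0 ≤ μ) (hM : 0 < M) (hε : 0 ≤ ε)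
    (hεμ : ε ≤ μ ^ 2 / (32 * M)) (hD : D = (μ - √(μ ^ 2 - 32 * M * ε)) / (8 * M)) :
    0 ≤ D ∧ μ * D = 4 * M * D ^ 2 + 2 * ε ∧ 8 * M * D ≤ μ ∧ μ * D ≤ 4 * ε := by
  have hdisc : 0 ≤ μ ^ 2 - 32 * M * ε := by
    rw [le_div_iff₀ (by positivity)] at hεμ; linarith
  have hsq := Real.sq_sqrt hdisc
  have hsqrt_le : √(μ ^ 2 - 32 * M * ε) ≤ μ :=
    Real.sqrt_le_iff.mpr ⟨hμ, by linarith [mul_nonneg hM.le hε]⟩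
  have h8 : 8 * M * D = μ - √(μ ^ 2 - 32 * M * ε) := by rw [hD]; field_simp
  have hD0 : 0 ≤ D := by rw [hD]; exact div_nonneg (by linarith) (by positivity)
  have hquad : μ * D = 4 * M * D ^ 2 + 2 * ε := by nlinarith
  have h8le : 8 * M * D ≤ μ := by nlinarith [Real.sqrt_nonneg (μ ^ 2 - 32 * M * ε)]
  exact ⟨hD0, hquad, h8le, by nlinarith⟩

theorem statement2_general {d : ℕ} (E Eδ : EuclideanSpace ℝ (Fin d) → ℝ)
    (hE : ContDiff ℝ 2 E) (hEδ : ContDiff ℝ 2 Eδ)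
    (xstar : EuclideanSpace ℝ (Fin d)) (hcrit : gradient E xstar = 0)
    (δ M μ L ε : ℝ) (hδ : 0 < δ) (hM : 0 < M) (hμ : 0 < μ)
    (hLip : ∀ x ∈ Metric.ball xstar δ, ∀ y ∈ Metric.ball xstar δ,
      ‖fderiv ℝ (gradient E) x - fderiv ℝ (gradient E) y‖ ≤ M * ‖x - y‖)
    (hmod : ∀ x ∈ Metric.ball xstar δ, ∀ lam : ℝ,
      Module.End.HasEigenvalue
        ((fderiv ℝ (gradient E) x).toLinearMap) lam → μ ≤ |lam| ∧ |lam| ≤ L)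
    (hδLip : ∀ x ∈ Metric.ball xstar δ, ∀ y ∈ Metric.ball xstar δ,
      ‖fderiv ℝ (gradient Eδ) x - fderiv ℝ (gradient Eδ) y‖ ≤ ε * ‖x - y‖)
    (hδHess : ∀ x ∈ Metric.ball xstar δ, ‖fderiv ℝ (gradient Eδ) x‖ ≤ ε)
    (hδGrad : ∀ x ∈ Metric.ball xstar δ, ‖gradient Eδ x‖ ≤ ε)
    (hεpos : 0 < ε)
    (hεsmall : ε ≤ min (min (μ / 2) (μ ^ 2 / (32 * M))) (min (μ * δ / 12) M))
    (g : EuclideanSpace ℝ (Fin d) → EuclideanSpace ℝ (Fin d))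
    (hg : ∀ x, g x = x -
      (Ring.inverse (fderiv ℝ (gradient (fun y => E y + Eδ y)) xstar))
        (gradient (fun y => E y + Eδ y) x))
    (D : ℝ) (hD : D = (μ - Real.sqrt (μ ^ 2 - 32 * M * ε)) / (8 * M)) :
    Set.MapsTo g (Metric.closedBall xstar D) (Metric.closedBall xstar D) ∧
      LipschitzOnWith (1 / 2) g (Metric.closedBall xstar D) := by
  simp only [le_min_iff] at hεsmall
  obtain ⟨⟨hεμ, hεM32⟩, hεδ, hεM⟩ := hεsmall
  obtain ⟨hD0, hDquad, hDμ, hDε⟩ := smallRoot_spec hμ.le hM hεpos.le hεM32 hD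
  have hx₀ : xstar ∈ ball xstar δ := mem_ball_self hδ
  have hDδ : closedBall xstar D ⊆ ball xstar δ := closedBall_subset_ball (by nlinarith)
  set H := fderiv ℝ (∇ fun y => E y + Eδ y) xstar
  have hH : ∀ v, μ / 2 * ‖v‖ ≤ ‖H v‖ := fun v =>
    (sub_mul_norm_le_norm_fderiv_gradient_add_apply hE hEδ hμ.le
      (fun lam h => (hmod xstar hx₀ lam h).1) (hδHess xstar hx₀) v).trans' (by gcongr; linarith)
  have hu := H.isUnit_of_mul_norm_le (half_pos hμ) hH
  have hTaylor := fun x (hx : x ∈ closedBall xstar D) y (hy : y ∈ closedBall xstar D) =>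
    norm_gradient_add_sub_sub_le hE hEδ hM.le hεpos.le
      (fun x hx y hy => hLip x (hDδ hx) y (hDδ hy))
      (fun x hx y hy => hδLip x (hDδ hx) y (hDδ hy)) hx hy
  have hgrad₀ : ‖∇ (fun y => E y + Eδ y) xstar‖ ≤ ε := by
    rw [gradient_fun_add (hE.differentiable two_ne_zero xstar)
      (hEδ.differentiable two_ne_zero xstar), hcrit, zero_add]
    exact hδGrad xstar hx₀
  rw [show g = newtonMap _ _ from funext hg]
  refine newtonMap_mapsTo_and_lipschitzOnWith (Ring.inverse_mul_cancel H hu)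
    (H.norm_inverse_le hu (half_pos hμ) hH) hTaylor hgrad₀ (by positivity) ?_ ?_
  · rw [inv_mul_eq_div, div_le_iff₀ (half_pos hμ)]
    norm_num
    nlinarith [mul_le_mul_of_nonneg_right hεM hD0]
  · rw [inv_mul_eq_div, inv_mul_eq_div, one_sub_div (half_pos hμ).ne', div_mul_eq_mul_div,
      div_le_div_iff_of_pos_right (half_pos hμ)]
    nlinarith

/-- contraction step in the proof of Theorem 4.6: under the hypotheses of
Theorem 4.6, the Newton-type map `g(x) = x - (∇²E_NN(x*))⁻¹ ∇E_NN(x)` maps the closed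
ball of radius `D = (μ - √(μ² - 32Mε))/(8M)` around `x*` into itself and is a
contraction there with Lipschitz constant at most `1/2`. -/
theorem statement2 {d : ℕ} (E Eδ : EuclideanSpace ℝ (Fin d) → ℝ)
    (hE : ContDiff ℝ 2 E) (hEδ : ContDiff ℝ 2 Eδ)
    (xstar : EuclideanSpace ℝ (Fin d)) (hcrit : gradient E xstar = 0)
    (δ M μ L ε : ℝ) (hδ : 0 < δ) (hM : 0 < M) (hμ : 0 < μ) (hμL : μ < L)
    (hLip : ∀ x ∈ Metric.ball xstar δ, ∀ y ∈ Metric.ball xstar δ,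
      ‖fderiv ℝ (gradient E) x - fderiv ℝ (gradient E) y‖ ≤ M * ‖x - y‖)
    (hmod : ∀ x ∈ Metric.ball xstar δ, ∀ lam : ℝ,
      Module.End.HasEigenvalue
        ((fderiv ℝ (gradient E) x).toLinearMap) lam → μ ≤ |lam| ∧ |lam| ≤ L)
    (hδLip : ∀ x ∈ Metric.ball xstar δ, ∀ y ∈ Metric.ball xstar δ,
      ‖fderiv ℝ (gradient Eδ) x - fderiv ℝ (gradient Eδ) y‖ ≤ ε * ‖x - y‖)
    (hδHess : ∀ x ∈ Metric.ball xstar δ, ‖fderiv ℝ (gradient Eδ) x‖ ≤ ε)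
    (hδGrad : ∀ x ∈ Metric.ball xstar δ, ‖gradient Eδ x‖ ≤ ε)
    (hεpos : 0 < ε)
    (hεsmall : ε ≤ min (min (μ / 2) (μ ^ 2 / (32 * M))) (min (μ * δ / 12) M))
    (g : EuclideanSpace ℝ (Fin d) → EuclideanSpace ℝ (Fin d))
    (hg : ∀ x, g x = x -
      (Ring.inverse (fderiv ℝ (gradient (fun y => E y + Eδ y)) xstar))
        (gradient (fun y => E y + Eδ y) x))
    (D : ℝ) (hD : D = (μ - Real.sqrt (μ ^ 2 - 32 * M * ε)) / (8 * M)) :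
    Set.MapsTo g (Metric.closedBall xstar D) (Metric.closedBall xstar D) ∧
      LipschitzOnWith (1 / 2) g (Metric.closedBall xstar D) :=
  statement2_general E Eδ hE hEδ xstar hcrit δ M μ L ε hδ hM hμ hLip hmod hδLip hδHess hδGrad hεpos
    hεsmall g hg D hD
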